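/- arXiv:1910.00183 — 9 statements merged into one kernel-verified Lean document; each statement's English description precedes it below -/
import Mathlib

section
/- Let G be a connected undirected graph on vertices {1,…,n} (n ≥ 2) and let d ≥ 1. Then there exists a constant ν > 0 such that for every configuration x = (x_1,…,x_n) ∈ (ℝ^d)^n with ∑_{i=1}^n ‖x_i − x̄‖² = 1 (where x̄ = (1/n)∑_i x_i), one has (∑_{i=1}^n ‖F(x)_i‖²)^{1/2} ≥ ν. -/
/-!
Pairing each dart with its reverse, `∑ᵢ ⟪F(x)ᵢ, c - xᵢ⟫` equals half the total length
`T = ∑ ‖x_j - x_i‖` over the darts `(i, j)` of `G`, for every `c`. Taking `c = x̄`, Cauchy–Schwarz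
bounds `T / 2` by `‖F(x)‖ · (∑ ‖xᵢ - x̄‖²)^{1/2} = ‖F(x)‖`. Since `G` is connected, every distance
`‖x_i - x_j‖` is at most `T` (follow a path), hence so is every `‖x_i - x̄‖`; the normalisation then
forces `1 ≤ n T²`, so `T ≥ 1/n` and `ν = 1/(2n)` works.
-/

open Finset

/-- The bearing from agent `i` to agent `j`: the unit vector pointing from `x i` to `x j`,
or `0` when the agents coincide. -/
noncomputable def bearing {d n : ℕ} (x : Fin n → EuclideanSpace ℝ (Fin d)) (i j : Fin n) :
    EuclideanSpace ℝ (Fin d) :=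
  ‖x j - x i‖⁻¹ • (x j - x i)

/-- The bearing-only consensus vector field `F(x)_i = ∑_{j ∈ N_i} u_{ij}(x)`. -/
noncomputable def consField {d n : ℕ} (G : SimpleGraph (Fin n)) [DecidableRel G.Adj]
    (x : Fin n → EuclideanSpace ℝ (Fin d)) (i : Fin n) : EuclideanSpace ℝ (Fin d) :=
  ∑ j ∈ G.neighborFinset i, bearing x i j

open RealInnerProductSpace

namespace SimpleGraph

variable {V : Type*} (G : SimpleGraph V)

theorem sum_darts_eq_sum_neighborFinset [Fintype V] [DecidableRel G.Adj] {M : Type*}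
    [AddCommMonoid M] (f : V → V → M) :
    ∑ d : G.Dart, f d.fst d.snd = ∑ v, ∑ w ∈ G.neighborFinset v, f v w := by
  classical
  rw [← sum_fiberwise univ fun d : G.Dart => d.fst]
  refine sum_congr rfl fun v _ => ?_
  rw [dart_fst_fiber G v, sum_image fun _ _ _ _ h => G.dartOfNeighborSet_injective v h]
  exact (sum_subtype _ (fun w => G.mem_neighborFinset v w) (f v)).symm

theorem sum_darts_symm [Fintype V] [DecidableRel G.Adj] {M : Type*} [AddCommMonoid M]
    (f : G.Dart → M) : ∑ d : G.Dart, f d.symm = ∑ d : G.Dart, f d :=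
  Equiv.sum_comp (Dart.symm_involutive.toPerm _) f

variable {G} {E : Type*} [SeminormedAddCommGroup E] (x : V → E)

theorem Walk.norm_sub_le_sum_darts {a b : V} (p : G.Walk a b) :
    ‖x b - x a‖ ≤ (p.darts.map fun d => ‖x d.snd - x d.fst‖).sum := by
  induction p with
  | nil => simp
  | @cons u v w _ q ih =>
    simp only [Walk.darts_cons, List.map_cons, List.sum_cons]
    linarith [norm_sub_le_norm_sub_add_norm_sub (x w) (x v) (x u)]

theorem Preconnected.norm_sub_le_sum_darts [Fintype V] [DecidableRel G.Adj]
    (hG : G.Preconnected) (a b : V) :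
    ‖x b - x a‖ ≤ ∑ d : G.Dart, ‖x d.snd - x d.fst‖ := by
  classical
  obtain ⟨p, hp⟩ := (hG a b).exists_isPath
  calc ‖x b - x a‖ ≤ (p.darts.map fun d => ‖x d.snd - x d.fst‖).sum :=
        p.norm_sub_le_sum_darts x
    _ = ∑ d ∈ p.darts.toFinset, ‖x d.snd - x d.fst‖ :=
        (List.sum_toFinset _ (Walk.darts_nodup_of_support_nodup hp.support_nodup)).symm
    _ ≤ ∑ d : G.Dart, ‖x d.snd - x d.fst‖ :=
        sum_le_sum_of_subset_of_nonneg (subset_univ _) fun _ _ _ => norm_nonneg _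

end SimpleGraph

theorem sum_inner_le_sqrt_mul_sqrt {ι F : Type*} [NormedAddCommGroup F] [InnerProductSpace ℝ F]
    (s : Finset ι) (f g : ι → F) :
    ∑ i ∈ s, ⟪f i, g i⟫ ≤ √(∑ i ∈ s, ‖f i‖ ^ 2) * √(∑ i ∈ s, ‖g i‖ ^ 2) :=
  (sum_le_sum fun i _ => real_inner_le_norm (f i) (g i)).trans
    (Real.sum_mul_le_sqrt_mul_sqrt _ _ _)

theorem norm_sub_centroid_le {ι F : Type*} [Fintype ι] [Nonempty ι] [SeminormedAddCommGroup F]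
    [NormedSpace ℝ F] (x : ι → F) (i : ι) {r : ℝ} (h : ∀ j, ‖x i - x j‖ ≤ r) :
    ‖x i - (Fintype.card ι : ℝ)⁻¹ • ∑ j, x j‖ ≤ r := by
  have hmem : ∑ j, (Fintype.card ι : ℝ)⁻¹ • x j ∈ Metric.closedBall (x i) r :=
    (convex_closedBall (x i) r).sum_mem (fun _ _ => by positivity)
      (by simp [Fintype.card_ne_zero]) fun j _ => by simpa [dist_comm, dist_eq_norm] using h j
  rwa [← smul_sum, mem_closedBall_iff_norm'] at hmem

section Bearing

variable {d n : ℕ} (x : Fin n → EuclideanSpace ℝ (Fin d))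

theorem bearing_swap (i j : Fin n) : bearing x j i = -bearing x i j := by
  rw [bearing, bearing, ← neg_sub, norm_neg, smul_neg]

theorem inner_bearing_sub (i j : Fin n) : ⟪bearing x i j, x j - x i⟫ = ‖x j - x i‖ := by
  rw [bearing, real_inner_smul_left, real_inner_self_eq_norm_sq]
  rcases eq_or_ne ‖x j - x i‖ 0 with h | h
  · simp [h]
  · field_simp

theorem inner_bearing_add_inner_bearing_swap (c : EuclideanSpace ℝ (Fin d)) (i j : Fin n) :
    ⟪bearing x i j, c - x i⟫ + ⟪bearing x j i, c - x j⟫ = ‖x j - x i‖ := by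
  rw [bearing_swap x i j, inner_neg_left, ← sub_eq_add_neg, ← inner_sub_right,
    sub_sub_sub_cancel_left, inner_bearing_sub]

theorem sum_inner_consField_sub (G : SimpleGraph (Fin n)) [DecidableRel G.Adj]
    (c : EuclideanSpace ℝ (Fin d)) :
    ∑ i, ⟪consField G x i, c - x i⟫ = (∑ e : G.Dart, ‖x e.snd - x e.fst‖) / 2 := by
  set g : G.Dart → ℝ := fun e => ⟪bearing x e.fst e.snd, c - x e.fst⟫
  have hg : ∑ i, ⟪consField G x i, c - x i⟫ = ∑ e, g e := by
    simp only [consField, sum_inner]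
    exact (G.sum_darts_eq_sum_neighborFinset fun i j => ⟪bearing x i j, c - x i⟫).symm
  have h2 : 2 * ∑ e, g e = ∑ e : G.Dart, ‖x e.snd - x e.fst‖ := by
    rw [two_mul]
    nth_rewrite 2 [← G.sum_darts_symm g]
    rw [← sum_add_distrib]
    exact sum_congr rfl fun e _ => inner_bearing_add_inner_bearing_swap x c e.fst e.snd
  rw [hg, ← h2]
  ring

end Bearing

theorem stmt_0_general {d n : ℕ} (hn : 2 ≤ n)
    (G : SimpleGraph (Fin n)) [DecidableRel G.Adj] (hG : G.Connected) :
    ∃ ν : ℝ, 0 < ν ∧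
      ∀ x : Fin n → EuclideanSpace ℝ (Fin d),
        (∑ i, ‖x i - (n : ℝ)⁻¹ • ∑ j, x j‖ ^ 2) = 1 →
        ν ≤ Real.sqrt (∑ i, ‖consField G x i‖ ^ 2) := by
  have : NeZero n := ⟨by omega⟩
  have hn0 : (0 : ℝ) < n := by positivity
  refine ⟨(2 * n)⁻¹, by positivity, fun x hx => ?_⟩
  set c := (n : ℝ)⁻¹ • ∑ j, x j
  set T := ∑ e : G.Dart, ‖x e.snd - x e.fst‖
  have hdev (i : Fin n) : ‖x i - c‖ ≤ T := by
    simpa using norm_sub_centroid_le x i fun j => hG.preconnected.norm_sub_le_sum_darts x j i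
  have hT : (n : ℝ)⁻¹ ≤ T := by
    have hsq : 1 ≤ n * T ^ 2 :=
      calc 1 = ∑ i, ‖x i - c‖ ^ 2 := hx.symm
        _ ≤ ∑ _i : Fin n, T ^ 2 := by gcongr with i; exact hdev i
        _ = n * T ^ 2 := by simp
    have hT0 : 0 ≤ T := sum_nonneg fun _ _ => norm_nonneg _
    have hn2 : (2 : ℝ) ≤ n := by exact_mod_cast hn
    rw [inv_le_iff_one_le_mul₀' hn0]
    nlinarith
  have hF : T / 2 ≤ √(∑ i, ‖consField G x i‖ ^ 2) :=
    calc T / 2 = ∑ i, ⟪consField G x i, c - x i⟫ := (sum_inner_consField_sub x G c).symm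
      _ ≤ √(∑ i, ‖consField G x i‖ ^ 2) * √(∑ i, ‖c - x i‖ ^ 2) :=
        sum_inner_le_sqrt_mul_sqrt _ _ _
      _ = √(∑ i, ‖consField G x i‖ ^ 2) := by
        simp_rw [norm_sub_rev c, hx, Real.sqrt_one, mul_one]
  calc (2 * n : ℝ)⁻¹ = (n : ℝ)⁻¹ / 2 := by ring
    _ ≤ T / 2 := by gcongr
    _ ≤ _ := hF

theorem stmt_0 {d n : ℕ} (hd : 1 ≤ d) (hn : 2 ≤ n)
    (G : SimpleGraph (Fin n)) [DecidableRel G.Adj] (hG : G.Connected) :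
    ∃ ν : ℝ, 0 < ν ∧
      ∀ x : Fin n → EuclideanSpace ℝ (Fin d),
        (∑ i, ‖x i - (n : ℝ)⁻¹ • ∑ j, x j‖ ^ 2) = 1 →
        ν ≤ Real.sqrt (∑ i, ‖consField G x i‖ ^ 2) :=
  stmt_0_general hn G hG
end

section
/- Let G be a connected undirected graph on vertices {1,…,n} and let d ≥ 1. For any configuration x ∈ (ℝ^d)^n, F(x)_i = 0 for all i if and only if all agents are coincident, i.e., x_1 = x_2 = ⋯ = x_n. -/
open Finset

open RealInnerProductSpace in
theorem stmt_1 {d n : ℕ} (hd : 1 ≤ d)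
    (G : SimpleGraph (Fin n)) [DecidableRel G.Adj] (hG : G.Connected)
    (x : Fin n → EuclideanSpace ℝ (Fin d)) :
    (∀ i, consField G x i = 0) ↔ (∀ i j, x i = x j) := by
  constructor
  · intro hF
    -- key: adjacent agents coincide
    have key : ∀ i j : Fin n, G.Adj i j → x i = x j := by
      set f : Fin n → Fin n → ℝ := fun i j => ⟪x i, bearing x i j⟫ with hf
      have hpair : ∀ i j : Fin n, f i j + f j i = -‖x j - x i‖ := by
        intro i j
        have hb : bearing x j i = -(bearing x i j) := by
          simp [bearing, norm_sub_rev (x i) (x j), smul_neg]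
          rw [norm_sub_rev]
          module
        have : f i j + f j i = ⟪x i - x j, bearing x i j⟫ := by
          rw [hf]; simp [hb, inner_sub_left, inner_neg_right]; ring
        rw [this]
        have : (x i - x j : EuclideanSpace ℝ (Fin d)) = -(x j - x i) := by abel
        rw [this, inner_neg_left, bearing, real_inner_smul_right,
          real_inner_self_eq_norm_sq]
        rcases eq_or_ne (x j - x i) 0 with h | h
        · simp [h]
        · have hn : ‖x j - x i‖ ≠ 0 := norm_ne_zero_iff.mpr h
          field_simp
      -- each vertex sum of inner products is zero
      have hzero : ∀ i, ∑ j ∈ G.neighborFinset i, f i j = 0 := by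
        intro i
        have := hF i
        have : ⟪x i, consField G x i⟫ = (0 : ℝ) := by rw [this]; simp
        rwa [consField, inner_sum] at this
      -- symmetrization
      have hswap : ∀ g : Fin n → Fin n → ℝ,
          (∑ i, ∑ j ∈ G.neighborFinset i, g i j)
            = ∑ i, ∑ j ∈ G.neighborFinset i, g j i := by
        intro g
        have h1 : ∀ (h : Fin n → Fin n → ℝ),
            (∑ i, ∑ j ∈ G.neighborFinset i, h i j)
              = ∑ i, ∑ j, if G.Adj i j then h i j else 0 := by
          intro h
          refine Finset.sum_congr rfl fun i _ => ?_
          rw [show G.neighborFinset i = Finset.univ.filter (G.Adj i) from by ext; simp, Finset.sum_filter]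
        rw [h1, h1, Finset.sum_comm]
        refine Finset.sum_congr rfl fun i _ => Finset.sum_congr rfl fun j _ => ?_
        simp [G.adj_comm]
      have hsum : (∑ i, ∑ j ∈ G.neighborFinset i, ‖x j - x i‖) = 0 := by
        have h2 : (∑ i, ∑ j ∈ G.neighborFinset i, (f i j + f j i)) = 0 := by
          rw [Finset.sum_congr rfl fun i _ => Finset.sum_add_distrib]
          rw [Finset.sum_congr rfl fun (i : Fin n) _ =>
            (rfl : (∑ j ∈ G.neighborFinset i, f i j) + _ = _)]
          rw [Finset.sum_add_distrib, ← hswap f]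
          simp [hzero]
        have h3 : (∑ i, ∑ j ∈ G.neighborFinset i, (f i j + f j i))
            = -∑ i, ∑ j ∈ G.neighborFinset i, ‖x j - x i‖ := by
          rw [← Finset.sum_neg_distrib]
          refine Finset.sum_congr rfl fun i _ => ?_
          rw [← Finset.sum_neg_distrib]
          exact Finset.sum_congr rfl fun j _ => hpair i j
        rw [h3] at h2
        linarith
      intro i j hij
      have hterm := (Finset.sum_eq_zero_iff_of_nonneg
        (fun i _ => Finset.sum_nonneg fun j _ => norm_nonneg _)).mp hsum i
        (Finset.mem_univ i)
      have := (Finset.sum_eq_zero_iff_of_nonneg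
        (fun j _ => norm_nonneg _)).mp hterm j
        ((SimpleGraph.mem_neighborFinset G i j).mpr hij)
      have : x j - x i = 0 := norm_eq_zero.mp this
      exact (sub_eq_zero.mp this).symm
    -- propagate along walks
    have reach : ∀ a b : Fin n, G.Reachable a b → x a = x b := by
      intro a b ⟨w⟩
      induction w with
      | nil => rfl
      | cons h p ih => exact (key _ _ h).trans ih
    exact fun i j => reach i j (hG i j)
  · intro h i
    rw [consField]
    refine Finset.sum_eq_zero fun j _ => ?_
    rw [bearing]
    rw [show x j - x i = 0 by rw [h i j]; abel]
    simp
end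

section
/- Let G be a directed graph on vertices {1,…,n} that has a globally reachable node (a node reachable from every other node by a directed path), and let d ≥ 1. For any configuration x ∈ (ℝ^d)^n, the directed bearing consensus field vanishes, i.e., ∑_{j ∈ N_i⁺} u_{ij}(x) = 0 for every i, if and only if all agents are coincident: x_1 = x_2 = ⋯ = x_n. -/
open Finset

/-- The directed bearing-only consensus vector field `F(x)_i = ∑_{j ∈ N_i⁺} u_{ij}(x)`,
where `A i j` means there is a directed edge from `i` to `j`. -/
noncomputable def dirConsField {d n : ℕ} (A : Fin n → Fin n → Prop) [DecidableRel A]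
    (x : Fin n → EuclideanSpace ℝ (Fin d)) (i : Fin n) : EuclideanSpace ℝ (Fin d) :=
  ∑ j ∈ Finset.univ.filter (fun j => A i j), bearing x i j

/-!
Fix a direction `c` and an agent `a` maximising `⟪c, x j⟫`. Every bearing `u_{aj}` then has
`⟪c, u_{aj}⟫ ≤ 0`, so if the bearings at `a` sum to zero each of them is orthogonal to `c`, and
every out-neighbour of `a` is again a maximiser. Following a path from `a` to the globally
reachable node `r` shows that `r` maximises `⟪c, x ·⟫` for every `c`, which forces `x i = x r`.
-/

open RealInnerProductSpace

section InnerProductSpace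

variable {E : Type*} [NormedAddCommGroup E] [InnerProductSpace ℝ E]

theorem inner_inv_norm_smul_sub_nonpos {c u v : E} (h : ⟪c, v⟫ ≤ ⟪c, u⟫) :
    ⟪c, ‖v - u‖⁻¹ • (v - u)⟫ ≤ 0 := by
  rw [real_inner_smul_right, inner_sub_right]
  exact mul_nonpos_of_nonneg_of_nonpos (by positivity) (by linarith)

theorem inner_inv_norm_smul_sub_eq_zero_iff {c u v : E} :
    ⟪c, ‖v - u‖⁻¹ • (v - u)⟫ = 0 ↔ ⟪c, v⟫ = ⟪c, u⟫ := by
  rcases eq_or_ne v u with rfl | hvu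
  · simp
  · have hnorm : ‖v - u‖⁻¹ ≠ 0 := inv_ne_zero (norm_ne_zero_iff.mpr (sub_ne_zero.mpr hvu))
    rw [real_inner_smul_right, mul_eq_zero_iff_left hnorm, inner_sub_right, sub_eq_zero]

theorem inner_eq_of_sum_inv_norm_smul_sub_eq_zero {ι : Type*} {s : Finset ι} {y : ι → E}
    {a b : ι} {c : E} (hsum : ∑ j ∈ s, ‖y j - y a‖⁻¹ • (y j - y a) = 0)
    (hmax : ∀ j ∈ s, ⟪c, y j⟫ ≤ ⟪c, y a⟫) (hb : b ∈ s) :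
    ⟪c, y b⟫ = ⟪c, y a⟫ := by
  have hnonpos : ∀ j ∈ s, ⟪c, ‖y j - y a‖⁻¹ • (y j - y a)⟫ ≤ 0 :=
    fun j hj => inner_inv_norm_smul_sub_nonpos (hmax j hj)
  have hinner : ∑ j ∈ s, ⟪c, ‖y j - y a‖⁻¹ • (y j - y a)⟫ = 0 := by
    rw [← inner_sum, hsum, inner_zero_right]
  exact inner_inv_norm_smul_sub_eq_zero_iff.mp
    ((sum_eq_zero_iff_of_nonpos hnonpos).mp hinner b hb)

theorem eq_of_forall_inner_le {u v : E} (h : ∀ c, ⟪c, u⟫ ≤ ⟪c, v⟫) : u = v := by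
  have huv := h (u - v)
  rw [← sub_nonpos, ← inner_sub_right] at huv
  exact sub_eq_zero.mp (real_inner_self_nonpos.mp huv)

end InnerProductSpace

theorem Relation.ReflTransGen.isMaxOn_univ {α β : Type*} [Preorder β] {f : α → β}
    {A : α → α → Prop} (hstep : ∀ a b, IsMaxOn f Set.univ a → A a b → f a ≤ f b) {a b : α}
    (hab : Relation.ReflTransGen A a b) (ha : IsMaxOn f Set.univ a) : IsMaxOn f Set.univ b := by
  induction hab with
  | refl => exact ha
  | tail _ hbc ih =>
    exact isMaxOn_univ_iff.mpr fun j => (isMaxOn_univ_iff.mp ih j).trans (hstep _ _ ih hbc)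

theorem inner_eq_of_dirConsField_eq_zero {d n : ℕ} {A : Fin n → Fin n → Prop} [DecidableRel A]
    {x : Fin n → EuclideanSpace ℝ (Fin d)} {a b : Fin n} {c : EuclideanSpace ℝ (Fin d)}
    (hF : dirConsField A x a = 0) (hmax : IsMaxOn (fun j => ⟪c, x j⟫) Set.univ a) (hab : A a b) :
    ⟪c, x b⟫ = ⟪c, x a⟫ :=
  inner_eq_of_sum_inv_norm_smul_sub_eq_zero hF (fun j _ => isMaxOn_univ_iff.mp hmax j)
    (mem_filter.mpr ⟨mem_univ b, hab⟩)

theorem dirConsField_eq_zero_of_forall_eq {d n : ℕ} (A : Fin n → Fin n → Prop) [DecidableRel A]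
    {x : Fin n → EuclideanSpace ℝ (Fin d)} (hx : ∀ i j, x i = x j) (i : Fin n) :
    dirConsField A x i = 0 :=
  sum_eq_zero fun j _ => by simp [bearing, hx j i]

theorem stmt_6_general {d n : ℕ}
    (A : Fin n → Fin n → Prop) [DecidableRel A]
    (hreach : ∃ r : Fin n, ∀ i : Fin n, Relation.ReflTransGen A i r)
    (x : Fin n → EuclideanSpace ℝ (Fin d)) :
    (∀ i, dirConsField A x i = 0) ↔ (∀ i j, x i = x j) := by
  refine ⟨fun hF => ?_, dirConsField_eq_zero_of_forall_eq A⟩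
  obtain ⟨r, hr⟩ := hreach
  have : Nonempty (Fin n) := ⟨r⟩
  have hr_max (c : EuclideanSpace ℝ (Fin d)) : IsMaxOn (fun j => ⟪c, x j⟫) Set.univ r := by
    obtain ⟨a, ha⟩ := Finite.exists_max fun j => ⟪c, x j⟫
    exact (hr a).isMaxOn_univ
      (fun a b hmax hab => (inner_eq_of_dirConsField_eq_zero (hF a) hmax hab).ge)
      (isMaxOn_univ_iff.mpr ha)
  have hx_eq_r (k : Fin n) : x k = x r :=
    eq_of_forall_inner_le fun c => isMaxOn_univ_iff.mp (hr_max c) k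
  intro i j
  rw [hx_eq_r i, hx_eq_r j]

theorem stmt_6 {d n : ℕ} (hd : 1 ≤ d)
    (A : Fin n → Fin n → Prop) [DecidableRel A]
    (hloop : ∀ i, ¬ A i i)
    (hreach : ∃ r : Fin n, ∀ i : Fin n, Relation.ReflTransGen A i r)
    (x : Fin n → EuclideanSpace ℝ (Fin d)) :
    (∀ i, dirConsField A x i = 0) ↔ (∀ i j, x i = x j) :=
  stmt_6_general A hreach x
end

section
/- Let G be a directed graph on vertices {1,…,n}, d ≥ 1, and let x : ℝ → (ℝ^d)^n be differentiable with xᵢ′(t) = ∑_{j ∈ N_i⁺} u_{ij}(x(t)) for all i and t. Then the maximum pairwise distance V(t) = max_{p,q ∈ {1,…,n}} ‖x_p(t) − x_q(t)‖ is a nonincreasing function of t. -/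
open Finset

open scoped RealInnerProductSpace

lemma bearing_norm_le {d n : ℕ} (x : Fin n → EuclideanSpace ℝ (Fin d)) (i j : Fin n) :
    ‖bearing x i j‖ ≤ 1 := by
  rw [bearing]
  rcases eq_or_ne (x j - x i) 0 with h | h
  · simp [h]
  · rw [norm_smul, norm_inv, norm_norm, inv_mul_cancel₀ (norm_ne_zero_iff.2 h)]

lemma dirConsField_norm_le {d n : ℕ} (A : Fin n → Fin n → Prop) [DecidableRel A]
    (y : Fin n → EuclideanSpace ℝ (Fin d)) (i : Fin n) : ‖dirConsField A y i‖ ≤ n := by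
  rw [dirConsField]
  calc ‖∑ j ∈ Finset.univ.filter (fun j => A i j), bearing y i j‖
      ≤ ∑ j ∈ Finset.univ.filter (fun j => A i j), ‖bearing y i j‖ := norm_sum_le _ _
    _ ≤ ∑ _j ∈ Finset.univ.filter (fun j => A i j), (1 : ℝ) :=
        Finset.sum_le_sum fun j _ => bearing_norm_le y i j
    _ = ((Finset.univ.filter (fun j => A i j)).card : ℝ) := by simp
    _ ≤ (n : ℝ) := by
        have h : (Finset.univ.filter (fun j => A i j)).card ≤ n := by
          calc (Finset.univ.filter (fun j => A i j)).card
              ≤ (Finset.univ : Finset (Fin n)).card := Finset.card_filter_le _ _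
            _ = n := by simp
        exact_mod_cast Nat.cast_le.2 h

lemma hasDerivAt_norm_comp {F : Type*} [NormedAddCommGroup F] [InnerProductSpace ℝ F]
    {y : ℝ → F} {y' : F} {t : ℝ} (hy : HasDerivAt y y' t) (hne : y t ≠ 0) :
    HasDerivAt (fun z => ‖y z‖) (⟪y t, y'⟫ / ‖y t‖) t := by
  have h2 : (fun z => ‖y z‖) = fun z => Real.sqrt (‖y z‖ ^ 2) := by
    funext z; rw [Real.sqrt_sq (norm_nonneg _)]
  have h3 := hy.norm_sq.sqrt (pow_ne_zero 2 (norm_ne_zero_iff.2 hne))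
  rw [h2]
  convert h3 using 1
  rw [Real.sqrt_sq (norm_nonneg _), mul_div_mul_left _ _ (two_ne_zero)]

lemma key_inner {d n : ℕ} (A : Fin n → Fin n → Prop) [DecidableRel A]
    (y : Fin n → EuclideanSpace ℝ (Fin d)) (p q : Fin n)
    (hmax : ∀ a b : Fin n, ‖y a - y b‖ ≤ ‖y p - y q‖) :
    ⟪y p - y q, dirConsField A y p - dirConsField A y q⟫ ≤ 0 := by
  set e := y p - y q with he
  rw [inner_sub_right]
  have h1 : ⟪e, dirConsField A y p⟫ ≤ 0 := by
    rw [dirConsField, inner_sum]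
    apply Finset.sum_nonpos
    intro j _
    rw [bearing, real_inner_smul_right]
    apply mul_nonpos_of_nonneg_of_nonpos (by positivity)
    have h2 : ⟪e, y j - y p⟫ = ⟪e, y j - y q⟫ - ⟪e, e⟫ := by
      rw [← inner_sub_right]; congr 1; rw [he]; abel
    rw [h2, real_inner_self_eq_norm_sq]
    nlinarith [real_inner_le_norm e (y j - y q), hmax j q, norm_nonneg e,
      norm_nonneg (y j - y q)]
  have h2 : 0 ≤ ⟪e, dirConsField A y q⟫ := by
    rw [dirConsField, inner_sum]
    apply Finset.sum_nonneg
    intro j _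
    rw [bearing, real_inner_smul_right]
    apply mul_nonneg (by positivity)
    have h3 : ⟪e, y j - y q⟫ = ⟪e, y j - y p⟫ + ⟪e, e⟫ := by
      rw [← inner_add_right]; congr 1; rw [he]; abel
    rw [h3, real_inner_self_eq_norm_sq]
    nlinarith [abs_le.1 (abs_real_inner_le_norm e (y j - y p)), hmax j p, norm_nonneg e,
      norm_nonneg (y j - y p)]
  linarith

theorem stmt_8 {d n : ℕ} (hd : 1 ≤ d) (hn : 0 < n)
    (A : Fin n → Fin n → Prop) [DecidableRel A]
    (x : ℝ → Fin n → EuclideanSpace ℝ (Fin d))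
    (hode : ∀ i t, HasDerivAt (fun s => x s i) (dirConsField A (x t) i) t) :
    ∀ s t : ℝ, s ≤ t →
      (⨆ p : Fin n, ⨆ q : Fin n, ‖x t p - x t q‖) ≤
      (⨆ p : Fin n, ⨆ q : Fin n, ‖x s p - x s q‖) := by
  intro s t hst
  haveI : NeZero n := ⟨hn.ne'⟩
  have hneF : (Finset.univ : Finset (Fin n × Fin n)).Nonempty := Finset.univ_nonempty
  set g : Fin n × Fin n → ℝ → ℝ := fun π z => ‖x z π.1 - x z π.2‖ with hgdef
  set f : ℝ → ℝ := fun z => Finset.univ.sup' hneF (fun π => g π z) with hfdef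
  have hxc : ∀ i, Continuous fun z => x z i := fun i =>
    continuous_iff_continuousAt.2 fun z => (hode i z).continuousAt
  have hgc : ∀ π : Fin n × Fin n, Continuous (g π) := fun π => ((hxc π.1).sub (hxc π.2)).norm
  have hfc : Continuous f := Continuous.finset_sup'_apply hneF fun π _ => hgc π
  have hglef : ∀ π z, g π z ≤ f z := fun π z =>
    Finset.le_sup' (fun π => g π z) (Finset.mem_univ π)
  have hf0 : ∀ z, 0 ≤ f z := fun z =>
    le_trans (norm_nonneg _) (hglef (⟨0, hn⟩, ⟨0, hn⟩) z)
  have hiSup : ∀ z, (⨆ p : Fin n, ⨆ q : Fin n, ‖x z p - x z q‖) = f z := by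
    intro z
    apply le_antisymm
    · exact ciSup_le fun p => ciSup_le fun q => hglef (p, q) z
    · refine Finset.sup'_le _ _ fun π _ => ?_
      calc g π z ≤ ⨆ q : Fin n, ‖x z π.1 - x z q‖ :=
            le_ciSup (f := fun q => ‖x z π.1 - x z q‖)
              (Set.Finite.bddAbove (Set.finite_range _)) π.2
        _ ≤ ⨆ p : Fin n, ⨆ q : Fin n, ‖x z p - x z q‖ :=
            le_ciSup (f := fun p => ⨆ q : Fin n, ‖x z p - x z q‖)
              (Set.Finite.bddAbove (Set.finite_range _)) π.1
  rw [hiSup t, hiSup s]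
  -- Lipschitz bound on agents
  have hxLip : ∀ (i : Fin n) (z w : ℝ), z ≤ w → ‖x w i - x z i‖ ≤ n * (w - z) := by
    intro i z w hzw
    exact norm_image_sub_le_of_norm_deriv_le_segment'
      (f := fun u => x u i) (f' := fun u => dirConsField A (x u) i)
      (fun u _ => (hode i u).hasDerivWithinAt)
      (fun u _ => dirConsField_norm_le A (x u) i) w (Set.right_mem_Icc.2 hzw)
  have key : ∀ ε : ℝ, 0 < ε → f t ≤ f s + ε + ε * (t - s) := by
    intro ε hε
    have main := image_le_of_liminf_slope_right_lt_deriv_boundary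
      (f := f) (f' := fun z => if f z = 0 then (2 * n + 1 : ℝ) else 0)
      (a := s) (b := t)
      (B := fun z => f s + ε + ε * (z - s)) (B' := fun _ => ε)
      hfc.continuousOn
      ?_ (by simp only [sub_self, mul_zero, add_zero]; linarith) (fun z => by
        simpa using (((hasDerivAt_id z).sub_const s).const_mul ε).const_add (f s + ε))
      ?_
    · exact main (Set.right_mem_Icc.2 hst)
    · -- slope condition
      intro z hz r hr
      by_cases hfz : f z = 0
      · -- all agents coincide at z; Lipschitz bound on slope
        replace hr : (2 * (n:ℝ) + 1) < r := by simpa [hfz] using hr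
        apply Filter.Eventually.frequently
        filter_upwards [self_mem_nhdsWithin] with w hw
        have hwz : z < w := hw
        have hcoin : ∀ a b : Fin n, x z a = x z b := by
          intro a b
          have h1 : g (a, b) z ≤ 0 := hfz ▸ hglef (a, b) z
          have h2 : ‖x z a - x z b‖ = 0 := le_antisymm h1 (norm_nonneg _)
          rwa [norm_eq_zero, sub_eq_zero] at h2
        have hfw : f w ≤ 2 * n * (w - z) := by
          refine Finset.sup'_le _ _ fun π _ => ?_
          have h1 : x w π.1 - x w π.2 = (x w π.1 - x z π.1) - (x w π.2 - x z π.2) := by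
            rw [hcoin π.1 π.2]; abel
          calc g π w = ‖(x w π.1 - x z π.1) - (x w π.2 - x z π.2)‖ := by rw [hgdef]; dsimp only; rw [h1]
            _ ≤ ‖x w π.1 - x z π.1‖ + ‖x w π.2 - x z π.2‖ := norm_sub_le _ _
            _ ≤ n * (w - z) + n * (w - z) :=
                add_le_add (hxLip π.1 z w hwz.le) (hxLip π.2 z w hwz.le)
            _ = 2 * n * (w - z) := by ring
        rw [slope_def_field, hfz, sub_zero, div_lt_iff₀ (sub_pos.2 hwz)]
        calc f w ≤ 2 * n * (w - z) := hfw
          _ < r * (w - z) := by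
            apply mul_lt_mul_of_pos_right _ (sub_pos.2 hwz)
            linarith
      · -- f z > 0
        replace hr : (0:ℝ) < r := by simpa [hfz] using hr
        have hfzpos : 0 < f z := lt_of_le_of_ne (hf0 z) (Ne.symm hfz)
        apply Filter.Eventually.frequently
        have hall : ∀ π : Fin n × Fin n,
            ∀ᶠ w in nhdsWithin z (Set.Ioi z), g π w - f z < r * (w - z) := by
          intro π
          rcases lt_or_eq_of_le (hglef π z) with hlt | heq
          · -- non-maximizing pair
            have : ∀ᶠ w in nhdsWithin z (Set.Ioi z), g π w < f z := by
              apply Filter.Eventually.filter_mono nhdsWithin_le_nhds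
              exact (hgc π).continuousAt.eventually_lt continuousAt_const hlt
            filter_upwards [this, self_mem_nhdsWithin] with w hw hw2
            have : (0:ℝ) < r * (w - z) := mul_pos hr (sub_pos.2 hw2)
            linarith
          · -- maximizing pair: derivative ≤ 0
            obtain ⟨p, q⟩ := π
            have hne0 : x z p - x z q ≠ 0 := by
              intro h
              apply hfz
              rw [← heq]
              show ‖x z p - x z q‖ = 0
              rw [h, norm_zero]
            have hder := hasDerivAt_norm_comp ((hode p z).sub (hode q z)) hne0
            have hmax : ∀ a b : Fin n, ‖x z a - x z b‖ ≤ ‖x z p - x z q‖ := by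
              intro a b
              calc ‖x z a - x z b‖ ≤ f z := hglef (a, b) z
                _ = ‖x z p - x z q‖ := heq ▸ rfl
            have hD : ⟪x z p - x z q, dirConsField A (x z) p - dirConsField A (x z) q⟫
                / ‖x z p - x z q‖ ≤ 0 :=
              div_nonpos_of_nonpos_of_nonneg (key_inner A (x z) p q hmax) (norm_nonneg _)
            have hslope := hasDerivAt_iff_tendsto_slope.1 hder
            have hev : ∀ᶠ w in nhdsWithin z {z}ᶜ,
                slope (fun w => ‖x w p - x w q‖) z w < r :=
              hslope (Iio_mem_nhds (lt_of_le_of_lt hD hr))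
            have hev2 := hev.filter_mono
              (nhdsWithin_mono z (fun w (hw : w ∈ Set.Ioi z) => ne_of_gt hw))
            filter_upwards [hev2, self_mem_nhdsWithin] with w hw hw2
            rw [slope_def_field, div_lt_iff₀ (sub_pos.2 hw2)] at hw
            rw [← heq]
            exact hw
        have := (Filter.eventually_all (ι := Fin n × Fin n)).2 hall
        filter_upwards [this, self_mem_nhdsWithin] with w hw hw2
        rw [slope_def_field, div_lt_iff₀ (sub_pos.2 hw2)]
        have : f w < f z + r * (w - z) := by
          refine (Finset.sup'_lt_iff hneF).2 fun π _ => ?_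
          linarith [hw π]
        linarith
    · -- bound : f z = B z → f' z < ε
      intro z hz hfB
      have h1 : 0 ≤ ε * (z - s) := mul_nonneg hε.le (sub_nonneg.2 hz.1)
      have h2 : f z ≠ 0 := by
        rw [hfB]
        have := hf0 s
        exact (by linarith : (0:ℝ) < f s + ε + ε * (z - s)).ne'
      show (if f z = 0 then (2 * (n:ℝ) + 1) else 0) < ε
      rw [if_neg h2]
      exact hε
  -- pass to the limit ε → 0
  have hts : 0 ≤ t - s := sub_nonneg.2 hst
  refine le_of_forall_pos_le_add fun ε' hε' => ?_
  have hpos : (0:ℝ) < 1 + (t - s) := by linarith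
  have hkey := key (ε' / (1 + (t - s))) (div_pos hε' hpos)
  have heq2 : ε' / (1 + (t - s)) + ε' / (1 + (t - s)) * (t - s) = ε' := by
    field_simp
  linarith
end

section
/- Let G be an undirected graph on {1,…,n} with edge set E, d ≥ 1, and for each edge {i,j} let u*_{ij} ∈ ℝ^d be a unit vector with u*_{ji} = −u*_{ij}. Define ψ(x) = ∑_{{i,j} ∈ E} (1/2)‖x_j − x_i‖·‖u_{ij}(x) − u*_{ij}‖². At every configuration x with x_i ≠ x_j for all edges {i,j} ∈ E, ψ is differentiable and its partial gradient with respect to x_i equals −∑_{j ∈ N_i} (u_{ij}(x) − u*_{ij}). -/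
open Finset

/-- The formation potential `ψ(x) = ∑_{{i,j} ∈ E} (1/2) ‖x_j - x_i‖ ‖u_{ij}(x) - u*_{ij}‖²`,
with each unordered edge counted once (hence half the sum over ordered adjacent pairs;
the summand is symmetric in `i, j` since `u*_{ji} = -u*_{ij}`). -/
noncomputable def formPotential {d n : ℕ} (G : SimpleGraph (Fin n)) [DecidableRel G.Adj]
    (ustar : Fin n → Fin n → EuclideanSpace ℝ (Fin d))
    (x : Fin n → EuclideanSpace ℝ (Fin d)) : ℝ :=
  (1 / 2) * ∑ i, ∑ j ∈ G.neighborFinset i,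
    (1 / 2) * ‖x j - x i‖ * ‖bearing x i j - ustar i j‖ ^ 2

/-!
For a unit vector `u`, `(1/2) ‖v‖ ‖v/‖v‖ - u‖² = ‖v‖ - ⟪u, v⟫`, so `ψ` is half the sum, over
ordered adjacent pairs, of the edge terms `‖x_j - x_i‖ - ⟪u*_{ij}, x_j - x_i⟫`. Only the terms of
edges at `i` depend on `x_i`, and by `u*_{ji} = -u*_{ij}` both orientations of an edge `{i, j}`
contribute the same `‖x_j - y‖ - ⟪u*_{ij}, x_j - y⟫`. Away from `y = x_j` this is differentiable in
`y` with gradient `-(u_{ij}(x) - u*_{ij})`, the gradient of the norm being the unit vector.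
-/

open RealInnerProductSpace

section InnerProductSpace

variable {F : Type*} [NormedAddCommGroup F] [InnerProductSpace ℝ F]

theorem half_mul_norm_mul_norm_inv_smul_sub_sq {u : F} (hu : ‖u‖ = 1) (v : F) :
    1 / 2 * ‖v‖ * ‖‖v‖⁻¹ • v - u‖ ^ 2 = ‖v‖ - ⟪u, v⟫ := by
  rcases eq_or_ne v 0 with rfl | hv
  · simp
  · have hv' : ‖v‖ ≠ 0 := norm_ne_zero_iff.mpr hv
    rw [norm_sub_sq_real, norm_smul, norm_inv, norm_norm, inv_mul_cancel₀ hv',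
      real_inner_smul_left, real_inner_comm, hu]
    field_simp
    ring

variable [CompleteSpace F]

theorem hasGradientAt_norm {v : F} (hv : v ≠ 0) : HasGradientAt (‖·‖) (‖v‖⁻¹ • v) v := by
  have hsq := (hasStrictFDerivAt_norm_sq v).hasFDerivAt.sqrt (by positivity)
  simp only [Real.sqrt_sq (norm_nonneg _)] at hsq
  refine hsq.congr_fderiv ?_
  ext w
  have hv' : ‖v‖ ≠ 0 := norm_ne_zero_iff.mpr hv
  simp
  field_simp

theorem hasGradientAt_norm_sub_sub_inner_sub {c p : F} (u : F) (h : c ≠ p) :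
    HasGradientAt (fun y => ‖c - y‖ - ⟪u, c - y⟫) (-(‖c - p‖⁻¹ • (c - p) - u)) p := by
  have hφ := (hasGradientAt_norm (sub_ne_zero.mpr h)).sub (innerSL ℝ u).hasFDerivAt
  refine (HasFDerivAt.comp p hφ ((hasFDerivAt_id p).const_sub c)).congr_fderiv ?_
  ext w
  simp

end InnerProductSpace

theorem SimpleGraph.sum_sum_neighborFinset_eq_sum_add {V M : Type*} [Fintype V] [DecidableEq V]
    [AddCommMonoid M] (G : SimpleGraph V) [DecidableRel G.Adj] (f : V → V → M) (i : V) :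
    ∑ a, ∑ b ∈ G.neighborFinset a, f a b =
      ∑ b ∈ G.neighborFinset i, (f i b + f b i) +
        ∑ a, ∑ b ∈ G.neighborFinset a, if a = i ∨ b = i then 0 else f a b := by
  have hsplit : ∀ a, ∀ b ∈ G.neighborFinset a, f a b =
      ((if a = i then f a b else 0) + if b = i then f a b else 0) +
        if a = i ∨ b = i then 0 else f a b := by
    intro a b hb
    have : a ≠ b := G.ne_of_adj ((G.mem_neighborFinset a b).mp hb)
    by_cases ha : a = i <;> by_cases hb : b = i <;> simp_all
  simp_rw [sum_congr rfl fun a _ => sum_congr rfl (hsplit a), sum_add_distrib]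
  congr 2
  · simp [sum_ite_eq']
  · simp only [mem_neighborFinset, sum_ite_eq', ← sum_filter]
    congr 1
    ext b
    simp [SimpleGraph.adj_comm]

theorem formPotential_update_eq_sum_add {d n : ℕ} (G : SimpleGraph (Fin n)) [DecidableRel G.Adj]
    (ustar : Fin n → Fin n → EuclideanSpace ℝ (Fin d))
    (hunit : ∀ i j, G.Adj i j → ‖ustar i j‖ = 1)
    (hskew : ∀ i j, G.Adj i j → ustar j i = -ustar i j)
    (x : Fin n → EuclideanSpace ℝ (Fin d)) (i : Fin n) :
    ∃ C, ∀ y, formPotential G ustar (Function.update x i y) =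
      ∑ j ∈ G.neighborFinset i, (‖x j - y‖ - ⟪ustar i j, x j - y⟫) + C := by
  set e : (Fin n → EuclideanSpace ℝ (Fin d)) → Fin n → Fin n → ℝ :=
    fun x a b => ‖x b - x a‖ - ⟪ustar a b, x b - x a⟫
  have hpot : ∀ x, formPotential G ustar x = 1 / 2 * ∑ a, ∑ b ∈ G.neighborFinset a, e x a b := by
    intro x
    unfold formPotential bearing
    congr 1
    refine sum_congr rfl fun a _ => sum_congr rfl fun b hb => ?_
    exact half_mul_norm_mul_norm_inv_smul_sub_sq (hunit a b ((G.mem_neighborFinset a b).mp hb)) _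
  refine ⟨1 / 2 * ∑ a, ∑ b ∈ G.neighborFinset a, if a = i ∨ b = i then 0 else e x a b, fun y => ?_⟩
  rw [hpot, G.sum_sum_neighborFinset_eq_sum_add _ i, mul_add]
  congr 1
  · rw [mul_sum]
    refine sum_congr rfl fun b hb => ?_
    have hib : G.Adj i b := (G.mem_neighborFinset i b).mp hb
    simp only [e, Function.update_self, Function.update_of_ne hib.ne', hskew i b hib,
      ← neg_sub (x b) y, norm_neg, inner_neg_neg]
    ring
  · congr 1
    refine sum_congr rfl fun a _ => sum_congr rfl fun b _ => ?_
    split_ifs with h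
    · rfl
    · rw [not_or] at h
      simp only [e, Function.update_of_ne h.1, Function.update_of_ne h.2]

theorem stmt_9_general {d n : ℕ}
    (G : SimpleGraph (Fin n)) [DecidableRel G.Adj]
    (ustar : Fin n → Fin n → EuclideanSpace ℝ (Fin d))
    (hunit : ∀ i j, G.Adj i j → ‖ustar i j‖ = 1)
    (hskew : ∀ i j, G.Adj i j → ustar j i = -ustar i j)
    (x : Fin n → EuclideanSpace ℝ (Fin d))
    (hfree : ∀ i j, G.Adj i j → x i ≠ x j) :
    ∀ i, HasGradientAt (fun y => formPotential G ustar (Function.update x i y))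
      (-(∑ j ∈ G.neighborFinset i, (bearing x i j - ustar i j))) (x i) := by
  intro i
  obtain ⟨C, hC⟩ := formPotential_update_eq_sum_add G ustar hunit hskew x i
  have hedges : HasFDerivAt (fun y => ∑ j ∈ G.neighborFinset i, (‖x j - y‖ - ⟪ustar i j, x j - y⟫))
      (∑ j ∈ G.neighborFinset i,
        InnerProductSpace.toDual ℝ _ (-(bearing x i j - ustar i j))) (x i) :=
    HasFDerivAt.fun_sum fun j hj => hasGradientAt_norm_sub_sub_inner_sub (ustar i j)
      (hfree i j ((G.mem_neighborFinset i j).mp hj)).symm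
  rw [funext hC, hasGradientAt_iff_hasFDerivAt, ← sum_neg_distrib, map_sum]
  exact hedges.add_const C

theorem stmt_9 {d n : ℕ} (hd : 1 ≤ d)
    (G : SimpleGraph (Fin n)) [DecidableRel G.Adj]
    (ustar : Fin n → Fin n → EuclideanSpace ℝ (Fin d))
    (hunit : ∀ i j, G.Adj i j → ‖ustar i j‖ = 1)
    (hskew : ∀ i j, G.Adj i j → ustar j i = -ustar i j)
    (x : Fin n → EuclideanSpace ℝ (Fin d))
    (hfree : ∀ i j, G.Adj i j → x i ≠ x j) :
    ∀ i, HasGradientAt (fun y => formPotential G ustar (Function.update x i y))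
      (-(∑ j ∈ G.neighborFinset i, (bearing x i j - ustar i j))) (x i) :=
  stmt_9_general G ustar hunit hskew x hfree
end

section
/- Let u_1,…,u_n and u*_1,…,u*_n be unit vectors in ℝ^d, let d_1,…,d_n > 0 be positive reals with ∑_{i=1}^n d_i u_i = 0, and let w ∈ ℝ^d be such that u_i − u*_i = w for every i. Then w = 0. -/
/-! Every `u i` lies on both unit spheres centred at `0` and at `w`, so `⟪u i, w⟫ = ‖w‖² / 2` for
all `i`. Pairing `∑ dᵢ uᵢ = 0` with `w` then gives `(∑ dᵢ) ‖w‖² / 2 = 0`, and `∑ dᵢ > 0`. -/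

open Finset

open scoped RealInnerProductSpace

section

variable {E : Type*} [NormedAddCommGroup E] [InnerProductSpace ℝ E]

theorem two_mul_inner_eq_norm_sq_of_norm_sub_eq {u w : E} (h : ‖u - w‖ = ‖u‖) :
    2 * ⟪u, w⟫ = ‖w‖ ^ 2 := by
  have := norm_sub_sq_real u w
  rw [h] at this
  linarith

theorem eq_zero_of_sum_smul_eq_zero_of_inner_eq {ι : Type*} {s : Finset ι} (hs : s.Nonempty)
    {c : ι → ℝ} (hc : ∀ i ∈ s, 0 < c i) {v : ι → E} (hv : ∑ i ∈ s, c i • v i = 0)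
    {w : E} {a : ℝ} (ha : ∀ i ∈ s, ⟪v i, w⟫ = a) : a = 0 := by
  have hsum : (∑ i ∈ s, c i) * a = 0 := by
    calc (∑ i ∈ s, c i) * a = ⟪∑ i ∈ s, c i • v i, w⟫ := by
          rw [sum_inner, sum_mul]
          exact sum_congr rfl fun i hi => by rw [real_inner_smul_left, ha i hi]
      _ = 0 := by rw [hv, inner_zero_left]
  exact (mul_eq_zero.mp hsum).resolve_left (sum_pos hc hs).ne'

end

theorem stmt_12 {d n : ℕ} (hn : 0 < n)
    (u ustar : Fin n → EuclideanSpace ℝ (Fin d))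
    (hu : ∀ i, ‖u i‖ = 1) (hustar : ∀ i, ‖ustar i‖ = 1)
    (dist : Fin n → ℝ) (hdist : ∀ i, 0 < dist i)
    (hsum : ∑ i, dist i • u i = 0)
    (w : EuclideanSpace ℝ (Fin d))
    (hw : ∀ i, u i - ustar i = w) :
    w = 0 := by
  have hinner : ∀ i ∈ univ, ⟪u i, w⟫ = ‖w‖ ^ 2 / 2 := fun i _ => by
    have hsphere : ‖u i - w‖ = ‖u i‖ := by
      rw [← hw i, sub_sub_cancel, hu i, hustar i]
    linarith [two_mul_inner_eq_norm_sq_of_norm_sub_eq hsphere]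
  have hnonempty : (univ : Finset (Fin n)).Nonempty := univ_nonempty_iff.mpr ⟨⟨0, hn⟩⟩
  have hw_sq : ‖w‖ ^ 2 / 2 = 0 :=
    eq_zero_of_sum_smul_eq_zero_of_inner_eq hnonempty (fun i _ => hdist i) hsum hinner
  simpa using hw_sq
end

section
/- Let p_1,…,p_k ∈ ℝ^d (k ≥ 1) be points that do not all lie on a single line (i.e., they are not collinear). Then the function ϑ : ℝ^d → ℝ defined by ϑ(y) = ∑_{i=1}^k ‖y − p_i‖ is strictly convex. -/
open Finset

theorem stmt_14 {d k : ℕ} (hk : 1 ≤ k)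
    (p : Fin k → EuclideanSpace ℝ (Fin d))
    (hp : ¬ Collinear ℝ (Set.range p)) :
    StrictConvexOn ℝ Set.univ (fun y : EuclideanSpace ℝ (Fin d) => ∑ i, ‖y - p i‖) := by
  refine ⟨convex_univ, fun x _ y _ hxy a b ha hb hab => ?_⟩
  simp only
  rw [smul_eq_mul, smul_eq_mul, Finset.mul_sum, Finset.mul_sum, ← Finset.sum_add_distrib]
  have key : ∀ i : Fin k, ‖a • x + b • y - p i‖ ≤ a * ‖x - p i‖ + b * ‖y - p i‖ := by
    intro i
    have : a • x + b • y - p i = a • (x - p i) + b • (y - p i) := by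
      rw [smul_sub, smul_sub]
      rw [show (a • x - a • p i) + (b • y - b • p i)
          = a • x + b • y - (a • p i + b • p i) by abel]
      rw [← add_smul, hab, one_smul]
    rw [this]
    calc ‖a • (x - p i) + b • (y - p i)‖ ≤ ‖a • (x - p i)‖ + ‖b • (y - p i)‖ :=
          norm_add_le _ _
      _ = a * ‖x - p i‖ + b * ‖y - p i‖ := by
          rw [norm_smul, norm_smul, Real.norm_of_nonneg ha.le, Real.norm_of_nonneg hb.le]
  have hne : (Finset.univ : Finset (Fin k)).Nonempty := by
    have : Nonempty (Fin k) := ⟨⟨0, hk⟩⟩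
    exact Finset.univ_nonempty
  refine Finset.sum_lt_sum (fun i _ => key i) ?_
  by_contra h
  push_neg at h
  apply hp
  rw [collinear_iff_exists_forall_eq_smul_vadd]
  refine ⟨x, y - x, ?_⟩
  rintro q ⟨i, rfl⟩
  -- from equality, derive SameRay
  have heq : ‖a • (x - p i) + b • (y - p i)‖ = ‖a • (x - p i)‖ + ‖b • (y - p i)‖ := by
    have h1 := h i (Finset.mem_univ i)
    have h2 := key i
    have : a • x + b • y - p i = a • (x - p i) + b • (y - p i) := by
      rw [smul_sub, smul_sub]
      rw [show (a • x - a • p i) + (b • y - b • p i)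
          = a • x + b • y - (a • p i + b • p i) by abel]
      rw [← add_smul, hab, one_smul]
    rw [norm_smul, norm_smul, Real.norm_of_nonneg ha.le, Real.norm_of_nonneg hb.le, ← this]
    exact le_antisymm h2 h1
  have hray : SameRay ℝ (x - p i) (y - p i) := by
    have hs := sameRay_iff_norm_add.mpr heq
    have e1 : x - p i = a⁻¹ • (a • (x - p i)) := by
      rw [smul_smul, inv_mul_cancel₀ ha.ne', one_smul]
    have e2 : y - p i = b⁻¹ • (b • (y - p i)) := by
      rw [smul_smul, inv_mul_cancel₀ hb.ne', one_smul]
    rw [e1, e2]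
    exact (hs.pos_smul_left (inv_pos.mpr ha)).pos_smul_right (inv_pos.mpr hb)
  rcases hray.exists_eq_smul with ⟨u, r₁, r₂, hr₁, hr₂, hsum, h1, h2⟩
  -- x - p i = r₁ • u, y - p i = r₂ • u, r₁ + r₂ = 1
  -- then y - x = (r₂ - r₁) • u
  have hyx : y - x = (r₂ - r₁) • u := by
    rw [show y - x = (y - p i) - (x - p i) by abel, h1, h2, sub_smul]
  by_cases hr : r₁ = r₂
  · exfalso
    apply hxy
    have : y - x = 0 := by rw [hyx, hr, sub_self, zero_smul]
    have := sub_eq_zero.mp this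
    exact this.symm
  · refine ⟨r₁ / (r₁ - r₂), ?_⟩
    have hd : r₁ - r₂ ≠ 0 := sub_ne_zero.mpr hr
    rw [hyx]
    rw [smul_smul]
    have : r₁ / (r₁ - r₂) * (r₂ - r₁) = -r₁ := by field_simp; ring
    rw [this]
    have : p i = x - r₁ • u := by rw [← h1]; abel
    rw [this, neg_smul]
    simp [vadd_eq_add]
    abel
end

section
/- Let y, p_1,…,p_k ∈ ℝ^d with y ≠ p_i for all i, and suppose the points y, p_1,…,p_k do not all lie on a single line. With v_i = (p_i − y)/‖p_i − y‖ and P(v) = I_d − v vᵀ, the matrix M = ∑_{i=1}^k (1/‖p_i − y‖) P(v_i) is symmetric positive definite. (M is the Hessian of the sum-of-distances function ϑ(y) = ∑_i ‖y − p_i‖ at y.) -/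
/-!
The quadratic form of `M` at `x` is `∑ i, ‖p i - y‖⁻¹ * (‖x‖² - ⟪x, v i⟫²)`. By Cauchy–Schwarz
every summand is nonnegative, and it vanishes only when `v i` lies on the line `ℝ ∙ x`. If this
happened for every `i`, all the `p i` would lie on the line `y + ℝ ∙ x`.
-/

open Finset Matrix RealInnerProductSpace

section InnerProductSpace

variable {F : Type*} [NormedAddCommGroup F] [InnerProductSpace ℝ F]

theorem sq_real_inner_le_sq_norm_mul_norm (x y : F) : ⟪x, y⟫ ^ 2 ≤ (‖x‖ * ‖y‖) ^ 2 :=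
  have h := abs_le.1 (abs_real_inner_le_norm x y)
  sq_le_sq' h.1 h.2

theorem sq_real_inner_lt_sq_norm_mul_norm_of_notMem_span_singleton {x y : F} (hx : x ≠ 0)
    (hy : y ∉ ℝ ∙ x) : ⟪x, y⟫ ^ 2 < (‖x‖ * ‖y‖) ^ 2 := by
  have hne : ‖⟪x, y⟫‖ ≠ ‖x‖ * ‖y‖ := fun h =>
    (((norm_inner_eq_norm_tfae ℝ x y).out 0 3 :
      ‖⟪x, y⟫‖ = ‖x‖ * ‖y‖ ↔ x = 0 ∨ y ∈ ℝ ∙ x).1 h).elim hx hy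
  have h := abs_lt.1 (lt_of_le_of_ne (abs_real_inner_le_norm x y) hne)
  exact sq_lt_sq' h.1 h.2

end InnerProductSpace

theorem exists_vsub_notMem_span_singleton_of_not_collinear {k V P ι : Type*} [DivisionRing k]
    [AddCommGroup V] [Module k V] [AddTorsor V P] {y : P} {p : ι → P}
    (h : ¬ Collinear k (insert y (Set.range p))) (x : V) : ∃ i, p i -ᵥ y ∉ k ∙ x := by
  by_contra! hspan
  refine h ((collinear_iff_of_mem (Set.mem_insert y _)).2 ⟨x, ?_⟩)
  rintro q (rfl | ⟨i, rfl⟩)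
  · exact ⟨0, by simp⟩
  · obtain ⟨r, hr⟩ := Submodule.mem_span_singleton.1 (hspan i)
    exact ⟨r, (eq_vadd_iff_vsub_eq _ _ _).2 hr.symm⟩

section Matrix

variable {ι : Type*} [Fintype ι] [DecidableEq ι]

theorem isHermitian_one_sub_vecMulVec_self (u : ι → ℝ) : (1 - vecMulVec u u).IsHermitian :=
  isHermitian_one.sub (posSemidef_vecMulVec_self_star u).isHermitian

theorem dotProduct_one_sub_vecMulVec_self_mulVec (u x : EuclideanSpace ℝ ι) :
    x.ofLp ⬝ᵥ ((1 - vecMulVec u.ofLp u.ofLp) *ᵥ x.ofLp) = ‖x‖ ^ 2 - ⟪x, u⟫ ^ 2 := by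
  rw [sub_mulVec, one_mulVec, vecMulVec_mulVec, dotProduct_sub, ← real_inner_self_eq_norm_sq]
  simp only [EuclideanSpace.inner_eq_star_dotProduct, star_trivial, sq]
  simp [dotProduct_comm]

theorem posDef_sum_smul_one_sub_vecMulVec_self {κ : Type*} [Fintype κ] {c : κ → ℝ}
    {u : κ → EuclideanSpace ℝ ι} (hc : ∀ i, 0 < c i) (hu : ∀ i, ‖u i‖ = 1)
    (hspan : ∀ x, ∃ i, u i ∉ ℝ ∙ x) :
    (∑ i, c i • (1 - vecMulVec (u i).ofLp (u i).ofLp)).PosDef := by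
  refine posDef_iff_dotProduct_mulVec.2 ⟨isSelfAdjoint_sum _ fun i _ =>
    (isHermitian_one_sub_vecMulVec_self _).smul (IsSelfAdjoint.all (c i)), fun x hx => ?_⟩
  set x' : EuclideanSpace ℝ ι := WithLp.toLp 2 x
  have hx' : x' ≠ 0 := by simpa [x'] using hx
  have hterm (i : κ) : star x ⬝ᵥ ((c i • (1 - vecMulVec (u i).ofLp (u i).ofLp)) *ᵥ x)
      = c i * (‖x'‖ ^ 2 - ⟪x', u i⟫ ^ 2) := by
    rw [smul_mulVec, dotProduct_smul, star_trivial, ← dotProduct_one_sub_vecMulVec_self_mulVec]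
    rfl
  obtain ⟨j, hj⟩ := hspan x'
  rw [sum_mulVec, dotProduct_sum]
  refine sum_pos' (fun i _ => ?_) ⟨j, mem_univ j, ?_⟩
  · have hle := sq_real_inner_le_sq_norm_mul_norm x' (u i)
    rw [hu i, mul_one] at hle
    exact hterm i ▸ mul_nonneg (hc i).le (sub_nonneg.2 hle)
  · have hlt := sq_real_inner_lt_sq_norm_mul_norm_of_notMem_span_singleton hx' hj
    rw [hu j, mul_one] at hlt
    exact hterm j ▸ mul_pos (hc j) (sub_pos.2 hlt)

end Matrix

theorem stmt_15 {d k : ℕ}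
    (y : EuclideanSpace ℝ (Fin d)) (p : Fin k → EuclideanSpace ℝ (Fin d))
    (hyp : ∀ i, y ≠ p i)
    (hline : ¬ Collinear ℝ (insert y (Set.range p)))
    (v : Fin k → EuclideanSpace ℝ (Fin d))
    (hv : ∀ i, v i = ‖p i - y‖⁻¹ • (p i - y))
    (M : Matrix (Fin d) (Fin d) ℝ)
    (hM : M = ∑ i, ‖p i - y‖⁻¹ •
        Matrix.of (fun a b : Fin d => (if a = b then (1 : ℝ) else 0) - v i a * v i b)) :
    M.PosDef := by
  have hpy (i : Fin k) : p i - y ≠ 0 := sub_ne_zero.2 (hyp i).symm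
  have hP (i : Fin k) :
      Matrix.of (fun a b : Fin d => (if a = b then (1 : ℝ) else 0) - v i a * v i b)
        = 1 - vecMulVec (v i).ofLp (v i).ofLp := by
    ext a b
    simp [one_apply, vecMulVec]
  subst hM
  simp only [hP]
  refine posDef_sum_smul_one_sub_vecMulVec_self (fun i => inv_pos.2 (norm_pos_iff.2 (hpy i)))
    (fun i => hv i ▸ norm_smul_inv_norm (hpy i)) fun x => ?_
  obtain ⟨i, hi⟩ := exists_vsub_notMem_span_singleton_of_not_collinear hline x
  exact ⟨i, by rwa [hv, Submodule.smul_mem_iff _ (inv_ne_zero (norm_ne_zero_iff.2 (hpy i)))]⟩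
end

section
/- Let p_1,…,p_k ∈ ℝ^d be points that do not all lie on a single line, and let v ∈ ℝ^d with ‖v‖ < k. Then the function y ↦ ∑_{i=1}^k ‖y − p_i‖ − ⟨v, y⟩ attains its minimum on ℝ^d at a unique point. (Equivalently, there is exactly one point at which an agent with k non-collinear observed neighbors and desired bearing sum v of norm less than k can be at equilibrium under the bearing-only formation controller.) -/
open Finset
open scoped RealInnerProductSpace

theorem stmt_16 {d k : ℕ}
    (p : Fin k → EuclideanSpace ℝ (Fin d))
    (hp : ¬ Collinear ℝ (Set.range p))
    (v : EuclideanSpace ℝ (Fin d)) (hv : ‖v‖ < k) :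
    ∃! y₀ : EuclideanSpace ℝ (Fin d),
      ∀ y : EuclideanSpace ℝ (Fin d),
        (∑ i, ‖y₀ - p i‖) - ⟪v, y₀⟫ ≤ (∑ i, ‖y - p i‖) - ⟪v, y⟫ := by
  set f : EuclideanSpace ℝ (Fin d) → ℝ :=
    fun y => (∑ i, ‖y - p i‖) - ⟪v, y⟫ with hf
  -- Existence by coercivity
  have hcont : Continuous f := by
    apply Continuous.sub
    · exact continuous_finset_sum _ fun i _ => (continuous_id.sub continuous_const).norm
    · exact (innerSL ℝ v).continuous
  have hb : ∀ y, (↑k - ‖v‖) * ‖y‖ - (∑ i, ‖p i‖) ≤ f y := by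
    intro y
    have h1 : ∑ i, (‖y‖ - ‖p i‖) ≤ ∑ i, ‖y - p i‖ :=
      Finset.sum_le_sum fun i _ => norm_sub_norm_le y (p i)
    have h1' : ∑ i : Fin k, (‖y‖ - ‖p i‖) = (k : ℝ) * ‖y‖ - ∑ i, ‖p i‖ := by
      rw [Finset.sum_sub_distrib, Finset.sum_const, Finset.card_univ, Fintype.card_fin,
        nsmul_eq_mul]
    have h2 : ⟪v, y⟫ ≤ ‖v‖ * ‖y‖ := real_inner_le_norm v y
    simp only [hf]
    nlinarith [norm_nonneg y]
  have hlim : Filter.Tendsto f (Filter.cocompact _) Filter.atTop := by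
    have hpos : (0 : ℝ) < ↑k - ‖v‖ := by linarith
    have hlin : Filter.Tendsto (fun t : ℝ => (↑k - ‖v‖) * t - ∑ i, ‖p i‖)
        Filter.atTop Filter.atTop := by
      apply Filter.tendsto_atTop_add_const_right
      exact Filter.Tendsto.const_mul_atTop hpos Filter.tendsto_id
    exact Filter.tendsto_atTop_mono hb (hlin.comp tendsto_norm_cocompact_atTop)
  obtain ⟨y₀, hy₀⟩ := hcont.exists_forall_le hlim
  refine ⟨y₀, hy₀, ?_⟩
  intro y₁ hy₁
  by_contra hne
  apply hp
  -- both are minimizers, same value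
  have heq : f y₁ = f y₀ := le_antisymm (hy₁ y₀) (hy₀ y₁)
  set m : EuclideanSpace ℝ (Fin d) := (2 : ℝ)⁻¹ • (y₁ + y₀) with hm
  have hmp : ∀ i, m - p i = (2 : ℝ)⁻¹ • ((y₁ - p i) + (y₀ - p i)) := by
    intro i
    rw [hm]
    rw [smul_add, smul_add]
    rw [show y₁ - p i = y₁ - p i from rfl]
    have : (2 : ℝ)⁻¹ • (y₁ - p i) + (2 : ℝ)⁻¹ • (y₀ - p i)
        = (2:ℝ)⁻¹ • y₁ + (2:ℝ)⁻¹ • y₀ - ((2:ℝ)⁻¹ • p i + (2:ℝ)⁻¹ • p i) := by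
      rw [smul_sub, smul_sub]; abel
    rw [this]
    have hpi : (2:ℝ)⁻¹ • p i + (2:ℝ)⁻¹ • p i = p i := by
      rw [← add_smul]; norm_num
    rw [hpi]
  have hterm : ∀ i ∈ Finset.univ,
      ‖m - p i‖ ≤ (2 : ℝ)⁻¹ * (‖y₁ - p i‖ + ‖y₀ - p i‖) := by
    intro i _
    rw [hmp i, norm_smul]
    have : ‖((2:ℝ)⁻¹ : ℝ)‖ = (2:ℝ)⁻¹ := by norm_num
    rw [this]
    exact mul_le_mul_of_nonneg_left (norm_add_le _ _) (by norm_num)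
  have hinner : ⟪v, m⟫ = (2:ℝ)⁻¹ * (⟪v, y₁⟫ + ⟪v, y₀⟫) := by
    rw [hm, real_inner_smul_right, inner_add_right]
  have hfm : f y₀ ≤ f m := hy₀ m
  have hsumge : ∑ i, (2 : ℝ)⁻¹ * (‖y₁ - p i‖ + ‖y₀ - p i‖) ≤ ∑ i, ‖m - p i‖ := by
    have hexp : ∑ i, (2 : ℝ)⁻¹ * (‖y₁ - p i‖ + ‖y₀ - p i‖)
        = (2:ℝ)⁻¹ * ((∑ i, ‖y₁ - p i‖) + ∑ i, ‖y₀ - p i‖) := by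
      rw [← Finset.mul_sum, Finset.sum_add_distrib]
    have e0 : f y₀ = (∑ i, ‖y₀ - p i‖) - ⟪v, y₀⟫ := rfl
    have e1 : f y₁ = (∑ i, ‖y₁ - p i‖) - ⟪v, y₁⟫ := rfl
    have em : f m = (∑ i, ‖m - p i‖) - ⟪v, m⟫ := rfl
    rw [hexp]
    rw [em, hinner] at hfm
    linarith [heq, hfm, e0.symm, e1.symm]
  have hsumeq : ∀ i ∈ Finset.univ,
      ‖m - p i‖ = (2 : ℝ)⁻¹ * (‖y₁ - p i‖ + ‖y₀ - p i‖) := by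
    have h := Finset.sum_le_sum hterm
    have heq2 : ∑ i, ‖m - p i‖ = ∑ i, (2 : ℝ)⁻¹ * (‖y₁ - p i‖ + ‖y₀ - p i‖) :=
      le_antisymm h hsumge
    exact fun i hi => ((Finset.sum_eq_sum_iff_of_le hterm).mp heq2) i hi
  have hray : ∀ i, SameRay ℝ (y₁ - p i) (y₀ - p i) := by
    intro i
    rw [sameRay_iff_norm_add]
    have h := hsumeq i (Finset.mem_univ i)
    rw [hmp i, norm_smul] at h
    have h2 : ‖((2:ℝ)⁻¹ : ℝ)‖ = (2:ℝ)⁻¹ := by norm_num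
    rw [h2] at h
    have : (2:ℝ)⁻¹ ≠ 0 := by norm_num
    field_simp at h
    linarith
  -- conclude collinearity
  rw [collinear_iff_exists_forall_eq_smul_vadd]
  refine ⟨y₀, y₁ - y₀, ?_⟩
  rintro _ ⟨i, rfl⟩
  obtain h1 | h2 | ⟨a, b, ha, hb, hab⟩ := hray i
  · exact ⟨1, by rw [sub_eq_zero] at h1; simp [← h1]⟩
  · exact ⟨0, by rw [sub_eq_zero] at h2; simp [← h2]⟩
  · have hne' : b - a ≠ 0 := by
      intro h
      have hba : b = a := by linarith [sub_eq_zero.mp h]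
      rw [hba] at hab
      have := smul_right_injective (EuclideanSpace ℝ (Fin d)) (ne_of_gt ha) hab
      rw [sub_eq_sub_iff_sub_eq_sub] at this
      simp only [sub_self] at this
      exact hne (by rw [sub_eq_zero] at this; exact this.symm ▸ rfl)
    refine ⟨-a / (b - a), ?_⟩
    apply smul_right_injective (EuclideanSpace ℝ (Fin d)) hne'
    have hsc : (b - a) * (-a / (b - a)) = -a := by field_simp
    show (b - a) • p i = (b - a) • ((-a / (b - a)) • (y₁ - y₀) +ᵥ y₀)
    rw [vadd_eq_add, smul_add, smul_smul, hsc]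
    have hab' : a • y₁ - a • p i = b • y₀ - b • p i := by
      rw [← smul_sub, ← smul_sub]; exact hab
    have h3 : a • y₁ - b • y₀ = a • p i - b • p i := sub_eq_sub_iff_sub_eq_sub.mp hab'
    rw [neg_smul, smul_sub, sub_smul, sub_smul]
    rw [show b • p i - a • p i = -(a • p i - b • p i) by abel, ← h3]
    abel
end
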